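/- arXiv:1203.3210 — 2 statements merged into one kernel-verified Lean document; each statement's English description precedes it below -/
import Mathlib

section
/- Let N_1, N_2 be n×n real symmetric matrices with N_1 positive definite and N_2 − N_1 positive semidefinite, and let Q̃_1, Q̃_2, Q̂_1, Q̂_2 be n×n real positive semidefinite matrices with (Q̃_1, Q̃_2) ≠ (Q̂_1, Q̂_2). If r_1 and r_2 are real numbers with r_1 ≥ r_2/4 > 0, then Tr[ r_1 (Q̂_1 − Q̃_1)( (N_1 + Q̃_1)^{−1} − (N_1 + Q̂_1)^{−1} ) + r_2 (Q̂_2 − Q̃_2)( (N_2 + Q̃_1 + Q̃_2)^{−1} − (N_2 + Q̂_1 + Q̂_2)^{−1} ) ] > 0. -/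
/-!
Put `A = N₁ + Q̃₁`, `B = N₁ + Q̂₁`, `C = N₂ + Q̃₁ + Q̃₂`, `E = N₂ + Q̂₁ + Q̂₂`, `D₁ = B - A` and
`D₂ = Q̂₂ - Q̃₂ = (E - C) - D₁`, so that `A ≤ C` and `B ≤ E` in the Loewner order. By the resolvent
identity the quantity is `r₁ tr(D₁A⁻¹D₁B⁻¹) + r₂ tr(D₂C⁻¹(D₁ + D₂)E⁻¹)`. The form
`q X = tr(X C⁻¹ X E⁻¹)` is positive definite on symmetric matrices; since `A⁻¹ ≥ C⁻¹` and
`B⁻¹ ≥ E⁻¹`, the first trace is `q D₁` plus two nonnegative gap terms, and completing the square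
gives `tr(D₂C⁻¹(D₁ + D₂)E⁻¹) = q(D₂ + D₁/2) - q(D₁)/4`. So the quantity is
`(r₁ - r₂/4) q(D₁) + r₁·gaps + r₂ q(D₂ + D₁/2) ≥ 0`. If it vanished, then `D₂ = -D₁/2` and the gaps
vanish, which forces `(C - A)C⁻¹D₁ = (E - B)E⁻¹D₁ = 0`; as `(C - A) - (E - B) = D₁/2`, this gives
`q(D₁) = 0`, hence `D₁ = D₂ = 0`.
-/

open Matrix
open scoped MatrixOrder ComplexOrder

namespace Matrix

section RCLike

variable {𝕜 m : Type*} [RCLike 𝕜] [Fintype m]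

lemma trace_mul_star_mul_mul_star_mul {X : Matrix m m 𝕜} (hX : X.IsHermitian)
    (U V : Matrix m m 𝕜) :
    trace (X * (star U * U) * X * (star V * V)) =
      trace ((U * X * star V)ᴴ * (U * X * star V)) := by
  calc trace (X * (star U * U) * X * (star V * V))
      = trace ((X * (star U * U) * X * star V) * V) := by simp only [Matrix.mul_assoc]
    _ = trace (V * (X * (star U * U) * X * star V)) := trace_mul_comm _ _
    _ = _ := by
      rw [conjTranspose_mul, conjTranspose_mul, hX.eq, ← star_eq_conjTranspose,
        ← star_eq_conjTranspose, star_star]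
      simp only [Matrix.mul_assoc]

variable [DecidableEq m]

lemma trace_mul_mul_mul_nonneg {X P Q : Matrix m m 𝕜} (hX : X.IsHermitian)
    (hP : P.PosSemidef) (hQ : Q.PosSemidef) : 0 ≤ trace (X * P * X * Q) := by
  obtain ⟨U, rfl⟩ := CStarAlgebra.nonneg_iff_eq_star_mul_self.mp hP.nonneg
  obtain ⟨V, rfl⟩ := CStarAlgebra.nonneg_iff_eq_star_mul_self.mp hQ.nonneg
  rw [trace_mul_star_mul_mul_star_mul hX]
  exact (posSemidef_conjTranspose_mul_self _).trace_nonneg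

lemma mul_eq_zero_of_trace_mul_mul_mul_eq_zero {X P Q : Matrix m m 𝕜} (hX : X.IsHermitian)
    (hP : P.PosSemidef) (hQ : Q.PosDef) (h : trace (X * P * X * Q) = 0) : P * X = 0 := by
  obtain ⟨U, rfl⟩ := CStarAlgebra.nonneg_iff_eq_star_mul_self.mp hP.nonneg
  obtain ⟨V, hV, rfl⟩ :=
    CStarAlgebra.isStrictlyPositive_iff_eq_star_mul_self.mp hQ.isStrictlyPositive
  rw [trace_mul_star_mul_mul_star_mul hX, trace_conjTranspose_mul_self_eq_zero_iff] at h
  rw [Matrix.mul_assoc, hV.star.mul_left_eq_zero.mp h, Matrix.mul_zero]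

lemma PosDef.posSemidef_inv_sub_inv {A C : Matrix m m 𝕜} (hA : A.PosDef)
    (hCA : (C - A).PosSemidef) : (A⁻¹ - C⁻¹).PosSemidef := by
  have hC : C.PosDef := by simpa using hA.add_posSemidef hCA
  have hAC : IsUnit A ↔ IsUnit C := iff_of_true hA.isUnit hC.isUnit
  have h_left : A⁻¹ - C⁻¹ = A⁻¹ * (C - A) * C⁻¹ := inv_sub_inv hAC
  have h_right : A⁻¹ - C⁻¹ = C⁻¹ * (C - A) * A⁻¹ := by
    rw [← neg_sub, inv_sub_inv hAC.symm, ← neg_sub C A]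
    noncomm_ring
  have h_sum : A⁻¹ - C⁻¹ =
      (C⁻¹)ᴴ * (C - A) * C⁻¹ + ((C - A) * C⁻¹)ᴴ * A⁻¹ * ((C - A) * C⁻¹) := by
    rw [conjTranspose_mul, hC.inv.isHermitian.eq, hCA.isHermitian.eq]
    calc A⁻¹ - C⁻¹ = C⁻¹ * (C - A) * (C⁻¹ + (A⁻¹ - C⁻¹)) := by
          rw [add_sub_cancel]; exact h_right
      _ = _ := by rw [h_left]; noncomm_ring
  rw [h_sum]
  exact (hCA.conjTranspose_mul_mul_same _).add (hA.inv.posSemidef.conjTranspose_mul_mul_same _)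

end RCLike

section Real

variable {m : Type*} [Fintype m]

lemma trace_mul_mul_mul_comm {X Y P R : Matrix m m ℝ} (hX : X.IsHermitian) (hY : Y.IsHermitian)
    (hP : P.IsHermitian) (hR : R.IsHermitian) :
    trace (X * P * Y * R) = trace (Y * P * X * R) := by
  calc trace (X * P * Y * R) = trace (X * P * Y * R)ᴴ := by rw [trace_conjTranspose, star_trivial]
    _ = trace (R * (Y * P * X)) := by
      simp only [conjTranspose_mul, hX.eq, hY.eq, hP.eq, hR.eq, Matrix.mul_assoc]
    _ = trace (Y * P * X * R) := trace_mul_comm _ _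

lemma trace_mul_mul_add_mul {X Y P R : Matrix m m ℝ} (hX : X.IsHermitian) (hY : Y.IsHermitian)
    (hP : P.IsHermitian) (hR : R.IsHermitian) :
    trace (Y * P * (X + Y) * R) =
      trace ((Y + (1 / 2 : ℝ) • X) * P * (Y + (1 / 2 : ℝ) • X) * R) -
        trace (X * P * X * R) / 4 := by
  simp only [Matrix.add_mul, Matrix.mul_add, Matrix.smul_mul, Matrix.mul_smul, trace_add,
    trace_smul, smul_eq_mul]
  rw [trace_mul_mul_mul_comm hX hY hP hR]
  ring

lemma trace_mul_mul_mul_sub_trace_mul_mul_mul (X P P' R R' : Matrix m m ℝ) :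
    trace (X * P' * X * R') - trace (X * P * X * R) =
      trace (X * (P' - P) * X * R') + trace (X * (R' - R) * X * P) := by
  have hcycle : trace (X * P * X * (R' - R)) = trace (X * (R' - R) * X * P) := by
    rw [Matrix.mul_assoc, trace_mul_comm, ← Matrix.mul_assoc]
  simp only [Matrix.mul_sub, Matrix.sub_mul, trace_sub] at hcycle ⊢
  linarith

variable [DecidableEq m]

lemma sub_mul_inv_mul_eq_zero {A C X : Matrix m m ℝ} (hA : IsUnit A) (hC : IsUnit C)
    (h : (A⁻¹ - C⁻¹) * X = 0) : (C - A) * C⁻¹ * X = 0 := by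
  have : (C - A) * C⁻¹ = A * (A⁻¹ - C⁻¹) := by
    rw [Matrix.sub_mul, Matrix.mul_sub, mul_nonsing_inv _ ((isUnit_iff_isUnit_det C).mp hC),
      mul_nonsing_inv _ ((isUnit_iff_isUnit_det A).mp hA)]
  rw [this, Matrix.mul_assoc, h, Matrix.mul_zero]

lemma sub_eq_zero_of_mul_mul_sub_eq_zero {M N P R : Matrix m m ℝ} (hMN : (M - N).IsHermitian)
    (hN : N.IsHermitian) (hP : P.PosDef) (hR : R.PosDef) (hM0 : M * P * (M - N) = 0)
    (hN0 : N * R * (M - N) = 0) : M - N = 0 := by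
  have hN_trace : trace (N * P * (M - N) * R) = 0 := by
    rw [trace_mul_mul_mul_comm hN hMN hP.isHermitian hR.isHermitian, Matrix.mul_assoc,
      trace_mul_comm, ← Matrix.mul_assoc, hN0, Matrix.zero_mul, trace_zero]
  have h_trace : trace ((M - N) * P * (M - N) * R) = 0 := by
    rw [Matrix.sub_mul, Matrix.sub_mul, Matrix.sub_mul, trace_sub, hM0, Matrix.zero_mul,
      trace_zero, hN_trace, sub_zero]
  exact hP.isUnit.mul_right_eq_zero.mp
    (mul_eq_zero_of_trace_mul_mul_mul_eq_zero hMN hP.posSemidef hR h_trace)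

lemma eq_of_inv_sub_inv_mul_eq_zero {A B C E : Matrix m m ℝ} (hA : A.PosDef) (hB : B.PosDef)
    (hC : C.PosDef) (hE : E.PosDef) (hEC : E - C = (1 / 2 : ℝ) • (B - A))
    (hAC : (A⁻¹ - C⁻¹) * (B - A) = 0) (hBE : (B⁻¹ - E⁻¹) * (B - A) = 0) : A = B := by
  have hMN : C - A - (E - B) = (1 / 2 : ℝ) • (B - A) := by
    rw [show C - A - (E - B) = B - A - (E - C) by abel, hEC]
    module
  have hMNh : (C - A - (E - B)).IsHermitian :=
    (hC.isHermitian.sub hA.isHermitian).sub (hE.isHermitian.sub hB.isHermitian)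
  have h_half : (1 / 2 : ℝ) • (B - A) = 0 := by
    rw [← hMN]
    refine sub_eq_zero_of_mul_mul_sub_eq_zero hMNh (hE.isHermitian.sub hB.isHermitian) hC.inv
      hE.inv ?_ ?_ <;> rw [hMN, Matrix.mul_smul]
    · rw [sub_mul_inv_mul_eq_zero hA.isUnit hC.isUnit hAC, smul_zero]
    · rw [sub_mul_inv_mul_eq_zero hB.isUnit hE.isUnit hBE, smul_zero]
  exact (sub_eq_zero.mp ((smul_eq_zero.mp h_half).resolve_left (by norm_num))).symm

end Real

end Matrix

variable {m : Type*} [Fintype m] [DecidableEq m]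

lemma dsc_trace_eq {A B C E D₁ D₂ : Matrix m m ℝ} (hA : A.PosDef) (hB : B.PosDef)
    (hC : C.PosDef) (hE : E.PosDef) (hD₁ : B - A = D₁) (hD₂ : E - C = D₁ + D₂) (r₁ r₂ : ℝ) :
    trace (r₁ • (D₁ * (A⁻¹ - B⁻¹)) + r₂ • (D₂ * (C⁻¹ - E⁻¹))) =
      (r₁ - r₂ / 4) * trace (D₁ * C⁻¹ * D₁ * E⁻¹) +
        r₁ * (trace (D₁ * (A⁻¹ - C⁻¹) * D₁ * B⁻¹) + trace (D₁ * (B⁻¹ - E⁻¹) * D₁ * C⁻¹)) +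
        r₂ * trace ((D₂ + (1 / 2 : ℝ) • D₁) * C⁻¹ * (D₂ + (1 / 2 : ℝ) • D₁) * E⁻¹) := by
  have hD₁h : D₁.IsHermitian := hD₁ ▸ hB.isHermitian.sub hA.isHermitian
  have hD₂h : D₂.IsHermitian := by
    rw [eq_sub_of_add_eq' hD₂.symm]
    exact (hE.isHermitian.sub hC.isHermitian).sub hD₁h
  have h₁ := trace_mul_mul_mul_sub_trace_mul_mul_mul D₁ C⁻¹ A⁻¹ E⁻¹ B⁻¹
  have h₂ := trace_mul_mul_add_mul hD₁h hD₂h hC.inv.isHermitian hE.inv.isHermitian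
  rw [trace_add, trace_smul, trace_smul, smul_eq_mul, smul_eq_mul,
    inv_sub_inv (iff_of_true hA.isUnit hB.isUnit), inv_sub_inv (iff_of_true hC.isUnit hE.isUnit),
    hD₁, hD₂]
  simp only [← Matrix.mul_assoc]
  linear_combination r₁ * h₁ + r₂ * h₂

theorem dsc_trace_pos {A B C E : Matrix m m ℝ} (hA : A.PosDef) (hB : B.PosDef)
    (hCA : (C - A).PosSemidef) (hEB : (E - B).PosSemidef) (hne : (A, C) ≠ (B, E))
    {r₁ r₂ : ℝ} (hr : r₂ / 4 ≤ r₁) (hr₂ : 0 < r₂) :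
    0 < trace (r₁ • ((B - A) * (A⁻¹ - B⁻¹)) + r₂ • ((E - C - (B - A)) * (C⁻¹ - E⁻¹))) := by
  have hC : C.PosDef := by simpa using hA.add_posSemidef hCA
  have hE : E.PosDef := by simpa using hB.add_posSemidef hEB
  set D₁ := B - A with hD₁
  set D₂ := E - C - D₁ with hD₂
  rw [dsc_trace_eq hA hB hC hE hD₁.symm (by rw [hD₂]; abel)]
  set S := D₂ + (1 / 2 : ℝ) • D₁ with hS
  have hD₁h : D₁.IsHermitian := hB.isHermitian.sub hA.isHermitian
  have hSh : S.IsHermitian :=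
    ((hE.isHermitian.sub hC.isHermitian).sub hD₁h).add (hD₁h.smul (IsSelfAdjoint.all _))
  have hCi := hC.inv.posSemidef
  have hAC := hA.posSemidef_inv_sub_inv hCA
  have hBE := hB.posSemidef_inv_sub_inv hEB
  have hq₁ := trace_mul_mul_mul_nonneg hD₁h hCi hE.inv.posSemidef
  have hqS := trace_mul_mul_mul_nonneg hSh hCi hE.inv.posSemidef
  have hgap₁ := trace_mul_mul_mul_nonneg hD₁h hAC hB.inv.posSemidef
  have hgap₂ := trace_mul_mul_mul_nonneg hD₁h hBE hCi
  have h_strict : 0 < trace (D₁ * (A⁻¹ - C⁻¹) * D₁ * B⁻¹) + trace (D₁ * (B⁻¹ - E⁻¹) * D₁ * C⁻¹)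
      ∨ 0 < trace (S * C⁻¹ * S * E⁻¹) := by
    by_contra! h
    have hS0 : S = 0 := hC.inv.isUnit.mul_right_eq_zero.mp
      (mul_eq_zero_of_trace_mul_mul_mul_eq_zero hSh hCi hE.inv (le_antisymm h.2 hqS))
    have hEC : E - C = (1 / 2 : ℝ) • D₁ := by
      rw [← sub_eq_zero, ← hS0, hS, hD₂]
      module
    have hAB : A = B := eq_of_inv_sub_inv_mul_eq_zero hA hB hC hE hEC
      (mul_eq_zero_of_trace_mul_mul_mul_eq_zero hD₁h hAC hB.inv (by linarith))
      (mul_eq_zero_of_trace_mul_mul_mul_eq_zero hD₁h hBE hC.inv (by linarith))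
    rw [hD₁, hAB, sub_self, smul_zero, sub_eq_zero] at hEC
    exact hne (by rw [hAB, hEC])
  have hr₁ : 0 < r₁ := by linarith
  have h_first := mul_nonneg (sub_nonneg.2 hr) hq₁
  rcases h_strict with h | h
  · linarith [mul_pos hr₁ h, mul_nonneg hr₂.le hqS]
  · linarith [mul_nonneg hr₁.le (add_nonneg hgap₁ hgap₂), mul_pos hr₂ h]

theorem adbc_two_user_dsc_pos_general (n : ℕ)
    (N1 N2 Qt1 Qt2 Qh1 Qh2 : Matrix (Fin n) (Fin n) ℝ)
    (hN1 : N1.PosDef) (hdeg : (N2 - N1).PosSemidef)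
    (hQt1 : Qt1.PosSemidef) (hQt2 : Qt2.PosSemidef)
    (hQh1 : Qh1.PosSemidef) (hQh2 : Qh2.PosSemidef)
    (hne : (Qt1, Qt2) ≠ (Qh1, Qh2))
    (r1 r2 : ℝ) (hr1 : r2 / 4 ≤ r1) (hr2 : 0 < r2 / 4) :
    0 < Matrix.trace
      (r1 • ((Qh1 - Qt1) * ((N1 + Qt1)⁻¹ - (N1 + Qh1)⁻¹)) +
       r2 • ((Qh2 - Qt2) * ((N2 + Qt1 + Qt2)⁻¹ - (N2 + Qh1 + Qh2)⁻¹))) := by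
  rw [show Qh2 - Qt2 = N2 + Qh1 + Qh2 - (N2 + Qt1 + Qt2) - (N1 + Qh1 - (N1 + Qt1)) by abel,
    show Qh1 - Qt1 = N1 + Qh1 - (N1 + Qt1) by abel]
  refine dsc_trace_pos (hN1.add_posSemidef hQt1) (hN1.add_posSemidef hQh1) ?_ ?_ ?_ hr1
    (by linarith)
  · rw [show N2 + Qt1 + Qt2 - (N1 + Qt1) = N2 - N1 + Qt2 by abel]
    exact hdeg.add hQt2
  · rw [show N2 + Qh1 + Qh2 - (N1 + Qh1) = N2 - N1 + Qh2 by abel]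
    exact hdeg.add hQh2
  · simp only [ne_eq, Prod.mk.injEq, add_right_inj] at hne ⊢
    rintro ⟨rfl, h⟩
    exact hne ⟨rfl, add_left_cancel h⟩

/-- DSC quantity of the 2-user ADBC game is strictly positive at distinct
feasible points for weights `r₁ ≥ r₂/4 > 0`. -/
theorem adbc_two_user_dsc_pos (n : ℕ)
    (N1 N2 Qt1 Qt2 Qh1 Qh2 : Matrix (Fin n) (Fin n) ℝ)
    (hN2symm : N2.IsSymm)
    (hN1 : N1.PosDef) (hdeg : (N2 - N1).PosSemidef)
    (hQt1 : Qt1.PosSemidef) (hQt2 : Qt2.PosSemidef)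
    (hQh1 : Qh1.PosSemidef) (hQh2 : Qh2.PosSemidef)
    (hne : (Qt1, Qt2) ≠ (Qh1, Qh2))
    (r1 r2 : ℝ) (hr1 : r2 / 4 ≤ r1) (hr2 : 0 < r2 / 4) :
    0 < Matrix.trace
      (r1 • ((Qh1 - Qt1) * ((N1 + Qt1)⁻¹ - (N1 + Qh1)⁻¹)) +
       r2 • ((Qh2 - Qt2) * ((N2 + Qt1 + Qt2)⁻¹ - (N2 + Qh1 + Qh2)⁻¹))) :=
  adbc_two_user_dsc_pos_general n N1 N2 Qt1 Qt2 Qh1 Qh2 hN1 hdeg hQt1 hQt2 hQh1 hQh2 hne r1 r2 hr1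
    hr2
end

section
/- Let K be a positive integer, let S be an n×n real positive semidefinite matrix, and let Q̃_1, ..., Q̃_K, Q̂_1, ..., Q̂_K, L̃_1, ..., L̃_K, L̂_1, ..., L̂_K, D̃, D̂ be n×n real positive semidefinite matrices satisfying: S − ∑_{i=1}^{K} Q̃_i and S − ∑_{i=1}^{K} Q̂_i are positive semidefinite; Tr(L̃_i Q̃_i) = 0 and Tr(L̂_i Q̂_i) = 0 for every i; Tr(D̃ (∑_{i=1}^{K} Q̃_i − S)) = 0; and Tr(D̂ (∑_{i=1}^{K} Q̂_i − S)) = 0. Then ∑_{i=1}^{K} Tr[ (Q̂_i − Q̃_i)(L̃_i − D̃) + (Q̃_i − Q̂_i)(L̂_i − D̂) ] ≥ 0. -/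
/-!
At a KKT point `(Q, L, D)`, complementary slackness turns the multiplier term
`∑ᵢ Tr[(Pᵢ − Qᵢ)(Lᵢ − D)]` into `∑ᵢ Tr(Pᵢ Lᵢ) + Tr(D (S − ∑ᵢ Pᵢ))`, a sum of traces of products
of positive semidefinite matrices whenever `P` is feasible, hence nonnegative. The quantity in
the theorem is the sum of this term for the first equilibrium tested against the second and
vice versa.
-/

open Finset Matrix
open scoped ComplexOrder

namespace Matrix

variable {m 𝕜 : Type*} [Fintype m] [RCLike 𝕜]

open scoped MatrixOrder in
theorem PosSemidef.trace_mul_nonneg {A B : Matrix m m 𝕜} (hA : A.PosSemidef)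
    (hB : B.PosSemidef) : 0 ≤ (A * B).trace := by
  classical
  set X := CFC.sqrt A
  have hX : Xᴴ = X := (CFC.sqrt_nonneg A).posSemidef.isHermitian.eq
  calc (0 : 𝕜) ≤ (X * B * Xᴴ).trace := (hB.mul_mul_conjTranspose_same X).trace_nonneg
    _ = (X * X * B).trace := by rw [hX, trace_mul_cycle]
    _ = (A * B).trace := by rw [CFC.sqrt_mul_sqrt_self A hA.nonneg]

variable {ι : Type*} (s : Finset ι)

theorem trace_multiplier_sum_eq_of_complementarySlackness {P Q L : ι → Matrix m m 𝕜}
    {D S : Matrix m m 𝕜} (hL : ∀ i ∈ s, (L i * Q i).trace = 0)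
    (hD : (D * (∑ i ∈ s, Q i - S)).trace = 0) :
    ∑ i ∈ s, ((P i - Q i) * (L i - D)).trace =
      ∑ i ∈ s, (P i * L i).trace + (D * (S - ∑ i ∈ s, P i)).trace := by
  have hQL : ∀ i ∈ s, (Q i * L i).trace = 0 := fun i hi => by rw [trace_mul_comm, hL i hi]
  have hDQ : (D * ∑ i ∈ s, Q i).trace = (D * S).trace := by
    rwa [Matrix.mul_sub, trace_sub, sub_eq_zero] at hD
  simp only [sub_mul, mul_sub, trace_sub, sum_sub_distrib, sum_congr rfl hQL, sum_const_zero,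
    trace_mul_comm _ D, ← trace_sum, ← mul_sum, hDQ]
  ring

theorem trace_multiplier_sum_nonneg {P Q L : ι → Matrix m m 𝕜} {D S : Matrix m m 𝕜}
    (hP : ∀ i ∈ s, (P i).PosSemidef) (hL : ∀ i ∈ s, (L i).PosSemidef) (hD : D.PosSemidef)
    (hPS : (S - ∑ i ∈ s, P i).PosSemidef) (hLQ : ∀ i ∈ s, (L i * Q i).trace = 0)
    (hDQ : (D * (∑ i ∈ s, Q i - S)).trace = 0) :
    0 ≤ ∑ i ∈ s, ((P i - Q i) * (L i - D)).trace := by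
  rw [trace_multiplier_sum_eq_of_complementarySlackness s hLQ hDQ]
  exact add_nonneg (sum_nonneg fun i hi => (hP i hi).trace_mul_nonneg (hL i hi))
    (hD.trace_mul_nonneg hPS)

end Matrix

theorem kkt_beta_nonneg_general (n K : ℕ)
    (S : Matrix (Fin n) (Fin n) ℝ)
    (Qt Qh Lt Lh : ℕ → Matrix (Fin n) (Fin n) ℝ)
    (Dt Dh : Matrix (Fin n) (Fin n) ℝ)
    (hQt : ∀ i ∈ Finset.Icc 1 K, (Qt i).PosSemidef)
    (hQh : ∀ i ∈ Finset.Icc 1 K, (Qh i).PosSemidef)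
    (hLt : ∀ i ∈ Finset.Icc 1 K, (Lt i).PosSemidef)
    (hLh : ∀ i ∈ Finset.Icc 1 K, (Lh i).PosSemidef)
    (hDt : Dt.PosSemidef) (hDh : Dh.PosSemidef)
    (hfeast : (S - ∑ i ∈ Finset.Icc 1 K, Qt i).PosSemidef)
    (hfeash : (S - ∑ i ∈ Finset.Icc 1 K, Qh i).PosSemidef)
    (hcst : ∀ i ∈ Finset.Icc 1 K, Matrix.trace (Lt i * Qt i) = 0)
    (hcsh : ∀ i ∈ Finset.Icc 1 K, Matrix.trace (Lh i * Qh i) = 0)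
    (hcsDt : Matrix.trace (Dt * ((∑ i ∈ Finset.Icc 1 K, Qt i) - S)) = 0)
    (hcsDh : Matrix.trace (Dh * ((∑ i ∈ Finset.Icc 1 K, Qh i) - S)) = 0) :
    0 ≤ ∑ i ∈ Finset.Icc 1 K,
      Matrix.trace ((Qh i - Qt i) * (Lt i - Dt) + (Qt i - Qh i) * (Lh i - Dh)) := by
  simp only [trace_add, sum_add_distrib]
  exact add_nonneg
    (trace_multiplier_sum_nonneg _ hQh hLt hDt hfeash hcst hcsDt)
    (trace_multiplier_sum_nonneg _ hQt hLh hDh hfeast hcsh hcsDh)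

/-- The KKT multiplier term `β` is nonnegative: given two KKT points of the
broadcast channel game with joint covariance constraint `∑ᵢ Qᵢ ⪯ S`,
`∑ᵢ Tr[(Q̂ᵢ − Q̃ᵢ)(L̃ᵢ − D̃) + (Q̃ᵢ − Q̂ᵢ)(L̂ᵢ − D̂)] ≥ 0`. -/
theorem kkt_beta_nonneg (n K : ℕ) (hK : 0 < K)
    (S : Matrix (Fin n) (Fin n) ℝ) (hS : S.PosSemidef)
    (Qt Qh Lt Lh : ℕ → Matrix (Fin n) (Fin n) ℝ)
    (Dt Dh : Matrix (Fin n) (Fin n) ℝ)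
    (hQt : ∀ i ∈ Finset.Icc 1 K, (Qt i).PosSemidef)
    (hQh : ∀ i ∈ Finset.Icc 1 K, (Qh i).PosSemidef)
    (hLt : ∀ i ∈ Finset.Icc 1 K, (Lt i).PosSemidef)
    (hLh : ∀ i ∈ Finset.Icc 1 K, (Lh i).PosSemidef)
    (hDt : Dt.PosSemidef) (hDh : Dh.PosSemidef)
    (hfeast : (S - ∑ i ∈ Finset.Icc 1 K, Qt i).PosSemidef)
    (hfeash : (S - ∑ i ∈ Finset.Icc 1 K, Qh i).PosSemidef)
    (hcst : ∀ i ∈ Finset.Icc 1 K, Matrix.trace (Lt i * Qt i) = 0)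
    (hcsh : ∀ i ∈ Finset.Icc 1 K, Matrix.trace (Lh i * Qh i) = 0)
    (hcsDt : Matrix.trace (Dt * ((∑ i ∈ Finset.Icc 1 K, Qt i) - S)) = 0)
    (hcsDh : Matrix.trace (Dh * ((∑ i ∈ Finset.Icc 1 K, Qh i) - S)) = 0) :
    0 ≤ ∑ i ∈ Finset.Icc 1 K,
      Matrix.trace ((Qh i - Qt i) * (Lt i - Dt) + (Qt i - Qh i) * (Lh i - Dh)) :=
  kkt_beta_nonneg_general n K S Qt Qh Lt Lh Dt Dh hQt hQh hLt hLh hDt hDh hfeast hfeash hcst hcsh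
    hcsDt hcsDh
end
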